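/- arXiv:math/0610210 — 4 statements merged into one kernel-verified Lean document; each statement's English description precedes it below -/
import Mathlib

section
/- Let Θ : [0,∞) → [0,∞) be continuous, positive definite (Θ(0)=0 and Θ(r)>0 for r>0), nondecreasing on [0,1] and nonincreasing on [1,∞). Define μ(r) = 1 + 4r² for 0 ≤ r ≤ 1/2 and μ(r) = 4Θ(1)r/Θ(2r) for r ≥ 1/2, and κ(r) = 2∫₀ʳ μ(z) dz. Then κ is continuously differentiable, strictly increasing, unbounded, κ(0)=0 (i.e., κ ∈ K∞), and the function χ(r) := Θ(2r)·μ(r) is of class K∞. -/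
/-- A function of class K∞ (viewed on `[0,∞)`): continuous, strictly increasing,
unbounded, and vanishing at `0`. -/
def IsKInf (f : ℝ → ℝ) : Prop :=
  ContinuousOn f (Set.Ici 0) ∧ StrictMonoOn f (Set.Ici 0) ∧ f 0 = 0 ∧
    ∀ M : ℝ, ∃ x, 0 ≤ x ∧ M ≤ f x

/-- For `Θ` continuous positive definite, nondecreasing on `[0,1]`
and nonincreasing on `[1,∞)`, with `μ(r) = 1 + 4r²` on `[0,1/2]`,
`μ(r) = 4Θ(1)r/Θ(2r)` on `[1/2,∞)`, `κ(r) = 2∫₀ʳ μ`, and `χ(r) = Θ(2r)μ(r)`: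
`κ` is C¹ (with continuous derivative `2μ`) and of class K∞, and `χ` is of class K∞. -/
theorem stmt6 (Θ μ κ χ : ℝ → ℝ)
    (hΘc : ContinuousOn Θ (Set.Ici 0)) (hΘ0 : Θ 0 = 0) (hΘpos : ∀ r > (0 : ℝ), 0 < Θ r)
    (hΘmono : MonotoneOn Θ (Set.Icc 0 1)) (hΘanti : AntitoneOn Θ (Set.Ici 1))
    (hμ1 : ∀ r : ℝ, 0 ≤ r → r ≤ 1 / 2 → μ r = 1 + 4 * r ^ 2)
    (hμ2 : ∀ r : ℝ, 1 / 2 ≤ r → μ r = 4 * Θ 1 * r / Θ (2 * r))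
    (hκ : ∀ r : ℝ, κ r = 2 * ∫ z in (0 : ℝ)..r, μ z)
    (hχ : ∀ r : ℝ, χ r = Θ (2 * r) * μ r) :
    (∀ r ≥ (0 : ℝ), HasDerivWithinAt κ (2 * μ r) (Set.Ici 0) r) ∧
      ContinuousOn (fun r => 2 * μ r) (Set.Ici 0) ∧
      IsKInf κ ∧ IsKInf χ := by
  have hΘ1 : (0:ℝ) < Θ 1 := hΘpos 1 one_pos
  have hΘ2r : ∀ r : ℝ, 1/2 ≤ r → 0 < Θ (2*r) := fun r hr => hΘpos _ (by linarith)
  have hΘ2r_le : ∀ r : ℝ, 1/2 ≤ r → Θ (2*r) ≤ Θ 1 := fun r hr =>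
    hΘanti (Set.mem_Ici.2 le_rfl) (Set.mem_Ici.2 (by linarith)) (by linarith)
  have hΘnonneg : ∀ r : ℝ, 0 ≤ r → 0 ≤ Θ r := by
    intro r hr
    rcases hr.eq_or_lt with h | h
    · rw [← h, hΘ0]
    · exact (hΘpos r h).le
  have hμge : ∀ z : ℝ, 0 ≤ z → 1 ≤ μ z := by
    intro z hz
    rcases le_total z (1/2) with h | h
    · rw [hμ1 z hz h]; nlinarith [sq_nonneg z]
    · rw [hμ2 z h, le_div_iff₀ (hΘ2r z h)]
      nlinarith [hΘ2r_le z h, mul_nonneg hΘ1.le (show (0:ℝ) ≤ 4*z - 1 by linarith)]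
  -- continuity of μ on [0, ∞)
  have hc1 : ContinuousOn μ (Set.Icc 0 (1/2)) := by
    have : ContinuousOn (fun r : ℝ => 1 + 4 * r ^ 2) (Set.Icc 0 (1/2)) := by
      fun_prop
    exact this.congr fun r hr => hμ1 r hr.1 hr.2
  have hc2 : ContinuousOn μ (Set.Ici (1/2)) := by
    have hden : ContinuousOn (fun r : ℝ => Θ (2 * r)) (Set.Ici (1/2)) := by
      apply hΘc.comp (by fun_prop : Continuous fun r : ℝ => 2 * r).continuousOn
      intro x hx
      simp only [Set.mem_Ici] at *
      linarith
    have : ContinuousOn (fun r : ℝ => 4 * Θ 1 * r / Θ (2 * r)) (Set.Ici (1/2)) := by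
      exact (by fun_prop : Continuous fun r : ℝ => 4 * Θ 1 * r).continuousOn.div hden
        fun x hx => (hΘ2r x hx).ne'
    exact this.congr fun r hr => hμ2 r hr
  have hμcont : ContinuousOn μ (Set.Ici 0) := by
    intro x hx
    have hx0 : (0:ℝ) ≤ x := hx
    have hU : Set.Ici (0:ℝ) = Set.Icc 0 (1/2) ∪ Set.Ici (1/2) := by
      ext y
      simp only [Set.mem_Ici, Set.mem_union, Set.mem_Icc]
      constructor
      · intro hy
        rcases le_total y (1/2) with h | h
        · exact Or.inl ⟨hy, h⟩
        · exact Or.inr h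
      · rintro (⟨h, _⟩ | h) <;> linarith
    rw [hU]
    rcases lt_or_ge x (1/2) with h | h
    · exact ContinuousWithinAt.union (hc1 x ⟨hx0, h.le⟩)
        (continuousWithinAt_of_notMem_closure (by simp [closure_Ici]; linarith))
    · rcases h.eq_or_lt with h' | h'
      · exact ContinuousWithinAt.union (hc1 x ⟨hx0, h'.ge⟩) (hc2 x h)
      · exact ContinuousWithinAt.union
          (continuousWithinAt_of_notMem_closure (by
            simp only [closure_Icc, Set.mem_Icc, not_and_or, not_le]
            exact Or.inr h'))
          (hc2 x h)
  -- a global continuous extension of μ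
  set ν : ℝ → ℝ := fun r => μ (max r 0) with hν
  have hνcont : Continuous ν :=
    hμcont.comp_continuous (continuous_id.max continuous_const) fun x => le_max_right x 0
  have hνeq : ∀ r : ℝ, 0 ≤ r → ν r = μ r := by
    intro r hr; simp [hν, max_eq_left hr]
  -- κ in terms of ν
  have hκν : ∀ r : ℝ, 0 ≤ r → κ r = 2 * ∫ z in (0:ℝ)..r, ν z := by
    intro r hr
    rw [hκ r]
    congr 1
    apply intervalIntegral.integral_congr
    intro z hz
    rw [Set.uIcc_of_le hr] at hz
    exact (hνeq z hz.1).symm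
  -- the derivative statement
  have hderiv : ∀ r ≥ (0:ℝ), HasDerivWithinAt κ (2 * μ r) (Set.Ici 0) r := by
    intro r hr
    have h1 : HasDerivAt (fun u => 2 * ∫ z in (0:ℝ)..u, ν z) (2 * ν r) r :=
      ((hνcont.integral_hasStrictDerivAt 0 r).hasDerivAt).const_mul 2
    have h2 : HasDerivWithinAt (fun u => 2 * ∫ z in (0:ℝ)..u, ν z) (2 * ν r)
        (Set.Ici 0) r := h1.hasDerivWithinAt
    rw [show (2 * μ r) = 2 * ν r from by rw [hνeq r hr]]
    exact h2.congr (fun y hy => hκν y hy) (hκν r hr)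
  have hκ0 : κ 0 = 0 := by simp [hκ 0]
  -- κ grows at least linearly: for 0 ≤ r ≤ s, κ s - κ r ≥ 2 (s - r)
  have hκgrow : ∀ r s : ℝ, 0 ≤ r → r ≤ s → κ r + 2 * (s - r) ≤ κ s := by
    intro r s hr hrs
    have hs : (0:ℝ) ≤ s := le_trans hr hrs
    have i1 : IntervalIntegrable ν MeasureTheory.volume 0 r := hνcont.intervalIntegrable 0 r
    have i2 : IntervalIntegrable ν MeasureTheory.volume r s := hνcont.intervalIntegrable r s
    have hadd : (∫ z in (0:ℝ)..r, ν z) + ∫ z in r..s, ν z = ∫ z in (0:ℝ)..s, ν z :=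
      intervalIntegral.integral_add_adjacent_intervals i1 i2
    have hmono : (s - r) ≤ ∫ z in r..s, ν z := by
      have := intervalIntegral.integral_mono_on hrs (intervalIntegrable_const (c := (1:ℝ))) i2
        (fun z hz => by
          rw [hνeq z (le_trans hr hz.1)]
          exact hμge z (le_trans hr hz.1))
      simpa using this
    rw [hκν r hr, hκν s hs, ← hadd]
    linarith
  have hκcont : ContinuousOn κ (Set.Ici 0) := fun r hr => (hderiv r hr).continuousWithinAt
  have hκmono : StrictMonoOn κ (Set.Ici 0) := by
    intro r hr s _ hrs
    have := hκgrow r s hr hrs.le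
    linarith
  have hκunb : ∀ M : ℝ, ∃ x, 0 ≤ x ∧ M ≤ κ x := by
    intro M
    refine ⟨|M|, abs_nonneg M, ?_⟩
    have := hκgrow 0 |M| le_rfl (abs_nonneg M)
    have hM : M ≤ |M| := le_abs_self M
    rw [hκ0] at this
    linarith [abs_nonneg M]
  -- χ
  have hχ1 : ∀ r : ℝ, 0 ≤ r → r ≤ 1/2 → χ r = Θ (2*r) * (1 + 4 * r ^ 2) := by
    intro r h1 h2; rw [hχ r, hμ1 r h1 h2]
  have hχ2 : ∀ r : ℝ, 1/2 ≤ r → χ r = 4 * Θ 1 * r := by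
    intro r hr
    rw [hχ r, hμ2 r hr, mul_div_assoc', mul_comm, mul_div_assoc,
      div_self (hΘ2r r hr).ne', mul_one]
  have hχ0 : χ 0 = 0 := by
    rw [hχ 0]
    simp [hΘ0]
  have hχcont : ContinuousOn χ (Set.Ici 0) := by
    have hden : ContinuousOn (fun r : ℝ => Θ (2 * r)) (Set.Ici 0) := by
      apply hΘc.comp (by fun_prop : Continuous fun r : ℝ => 2 * r).continuousOn
      intro x hx
      simp only [Set.mem_Ici] at *
      linarith
    exact (hden.mul hμcont).congr fun r _ => hχ r
  have hχA : ∀ r s : ℝ, 0 ≤ r → r < s → s ≤ 1/2 → χ r < χ s := by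
    intro r s hr hrs hs
    rw [hχ1 r hr (by linarith), hχ1 s (by linarith) hs]
    have hΘle : Θ (2*r) ≤ Θ (2*s) :=
      hΘmono ⟨by linarith, by linarith⟩ ⟨by linarith, by linarith⟩ (by linarith)
    have hΘs : 0 < Θ (2*s) := hΘpos _ (by linarith)
    have hΘr : 0 ≤ Θ (2*r) := hΘnonneg _ (by linarith)
    have hsq : r^2 < s^2 := by nlinarith
    nlinarith [mul_le_mul_of_nonneg_right hΘle (show (0:ℝ) ≤ 1 + 4*r^2 by positivity),
      mul_lt_mul_of_pos_left hsq hΘs]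
  have hχB : ∀ r s : ℝ, 1/2 ≤ r → r < s → χ r < χ s := by
    intro r s hr hrs
    rw [hχ2 r hr, hχ2 s (by linarith)]
    nlinarith
  have hχmono : StrictMonoOn χ (Set.Ici 0) := by
    intro r hr s _ hrs
    have hr0 : (0:ℝ) ≤ r := hr
    rcases le_total s (1/2) with h | h
    · exact hχA r s hr0 hrs h
    · rcases le_total (1/2) r with h' | h'
      · exact hχB r s h' hrs
      · rcases h'.lt_or_eq with hlt | he
        · calc χ r < χ (1/2) := hχA r (1/2) hr0 hlt le_rfl
            _ ≤ χ s := by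
                rcases h.eq_or_lt with he2 | hlt2
                · rw [he2]
                · exact (hχB (1/2) s le_rfl hlt2).le
        · exact hχB r s he.ge hrs
  have hχunb : ∀ M : ℝ, ∃ x, 0 ≤ x ∧ M ≤ χ x := by
    intro M
    refine ⟨max (1/2) (M / (4 * Θ 1)), by positivity, ?_⟩
    rw [hχ2 _ (le_max_left _ _)]
    have h1 : M / (4 * Θ 1) ≤ max (1/2) (M / (4 * Θ 1)) := le_max_right _ _
    have h2 : (0:ℝ) < 4 * Θ 1 := by linarith
    calc M = 4 * Θ 1 * (M / (4 * Θ 1)) := by field_simp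
      _ ≤ 4 * Θ 1 * max (1/2) (M / (4 * Θ 1)) := by
          exact mul_le_mul_of_nonneg_left h1 h2.le
  exact ⟨hderiv, (continuousOn_const.mul hμcont), ⟨hκcont, hκmono, hκ0, hκunb⟩,
    ⟨hχcont, hχmono, hχ0, hχunb⟩⟩
end

section
/- Let F : ℝⁿ × ℤ≥0 → ℝⁿ, let V : ℝⁿ × ℤ≥0 → [0,∞) satisfy α₁(|x|) ≤ V(x,k) ≤ α₂(|x|) for all x, k with α₁, α₂ ∈ K∞, and suppose there exist l ∈ ℤ≥0, δ > 0, a bounded function p : ℤ≥0 → [0,∞) with Σ_{i=k-l}^{k} p(i) ≥ δ for all k ∈ ℤ≥0, and γ ∈ K∞ such that V(F(x,k),k+1) - V(x,k) ≤ -p(k+1)γ(V(x,k)) for all x, k. Define U(x,k) = V(x,k) + (γ(V(x,k))/(4(l+1)))·Σ_{s=k-l}^{k} Σ_{j=s}^{k} p(j). Then for all x ∈ ℝⁿ and k ∈ ℤ≥0, U(F(x,k),k+1) - U(x,k) ≤ -(δ/(4(l+1)))·γ(V(x,k)). -/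
/-!
The weight `S(k) = ∑_{s=k-l}^{k} ∑_{j=s}^{k} p(j)` telescopes:
`S(k+1) = S(k) - ∑_{j=k-l}^{k} p(j) + (l+1) p(k+1)`. In the increment of `U`, the new term
`(l+1) p(k+1) γ(V)/(4(l+1))` is absorbed by the decrease `p(k+1) γ(V)` of `V`, while the
removed window sum is at least `δ` by persistency of excitation. Since `V` does not increase
and `γ` is monotone, replacing `γ(V(F(x,k),k+1))` by `γ(V(x,k))` in front of `S(k+1) ≥ 0`
only makes the increment larger.
-/

open Finset

/-- The paper's `S(k)`. -/
noncomputable def windowTailSum {M : Type*} [AddCommMonoid M] (f : ℤ → M) (l : ℕ) (k : ℤ) : M :=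
  ∑ s ∈ Icc (k - l) k, ∑ j ∈ Icc s k, f j

theorem windowTailSum_add_one {M : Type*} [AddCommMonoid M] (f : ℤ → M) (l : ℕ) (k : ℤ) :
    windowTailSum f l (k + 1) + ∑ j ∈ Icc (k - l) k, f j
      = windowTailSum f l k + (l + 1) • f (k + 1) := by
  have inner : ∀ s ∈ Icc (k + 1 - l) (k + 1),
      ∑ j ∈ Icc s (k + 1), f j = ∑ j ∈ Icc s k, f j + f (k + 1) := by
    intro s hs
    rw [← insert_Icc_right_eq_Icc_add_one (mem_Icc.1 hs).2, sum_insert (by simp), add_comm]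
  have outer_top : ∑ s ∈ Icc (k + 1 - l) (k + 1), ∑ j ∈ Icc s k, f j
      = ∑ s ∈ Icc (k + 1 - l) k, ∑ j ∈ Icc s k, f j := by
    rw [← insert_Icc_right_eq_Icc_add_one (by omega), sum_insert (by simp),
      Icc_eq_empty (by omega), sum_empty, zero_add]
  have outer_bot : windowTailSum f l k
      = ∑ j ∈ Icc (k - l) k, f j + ∑ s ∈ Icc (k + 1 - l) k, ∑ j ∈ Icc s k, f j := by
    conv_lhs => rw [windowTailSum, ← insert_Icc_add_one_left_eq_Icc (by omega),
      sum_insert (by simp), show k - l + 1 = k + 1 - l by ring]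
  have card : (Icc (k + 1 - l) (k + 1)).card = l + 1 := by
    rw [Int.card_Icc]; omega
  rw [windowTailSum, sum_congr rfl inner, sum_add_distrib, sum_const, card, outer_top, outer_bot]
  abel

theorem IsKInf.nonneg {f : ℝ → ℝ} (hf : IsKInf f) {t : ℝ} (ht : 0 ≤ t) : 0 ≤ f t :=
  hf.2.2.1 ▸ hf.2.1.monotoneOn Set.self_mem_Ici ht ht

theorem increment_le_of_decay_of_window_identity {a b ga gb q δ Q S S' L : ℝ} (hL : 0 < L)
    (hq : 0 ≤ q) (hga : 0 ≤ ga) (hgb : gb ≤ ga) (hS' : 0 ≤ S') (hQ : δ ≤ Q)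
    (hab : b - a ≤ -q * ga) (hS : S' + Q = S + L * q) :
    b + gb / (4 * L) * S' - (a + ga / (4 * L) * S) ≤ -(δ / (4 * L)) * ga := by
  calc b + gb / (4 * L) * S' - (a + ga / (4 * L) * S)
      ≤ (b - a) + ga / (4 * L) * (S' - S) := by
        have hgbS' : gb / (4 * L) * S' ≤ ga / (4 * L) * S' := by gcongr
        linarith
    _ = (b - a) + q * ga / 4 - ga * Q / (4 * L) := by
        rw [show S' - S = L * q - Q by linarith]; field_simp; ring
    _ ≤ -(δ / (4 * L)) * ga := by
        have hδQ : ga * δ / (4 * L) ≤ ga * Q / (4 * L) := by gcongr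
        have hqga := mul_nonneg hq hga
        rw [neg_mul, div_mul_eq_mul_div, mul_comm δ]
        linarith

theorem stmt8_general (n : ℕ)
    (F : EuclideanSpace ℝ (Fin n) → ℕ → EuclideanSpace ℝ (Fin n))
    (V : EuclideanSpace ℝ (Fin n) → ℕ → ℝ)
    (α₁ α₂ γ : ℝ → ℝ) (hα₁ : IsKInf α₁) (hγ : IsKInf γ)
    (hsand : ∀ x k, α₁ ‖x‖ ≤ V x k ∧ V x k ≤ α₂ ‖x‖)
    (p : ℤ → ℝ) (hpnn : ∀ i, 0 ≤ p i)
    (l : ℕ) (δ : ℝ)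
    (hPE : ∀ k : ℕ, δ ≤ ∑ i ∈ Finset.Icc ((k : ℤ) - l) (k : ℤ), p i)
    (hdecay : ∀ x k, V (F x k) (k + 1) - V x k ≤ -p ((k : ℤ) + 1) * γ (V x k)) :
    ∀ x k,
      (V (F x k) (k + 1) + γ (V (F x k) (k + 1)) / (4 * ((l : ℝ) + 1)) *
          ∑ s ∈ Finset.Icc (((k : ℤ) + 1) - l) ((k : ℤ) + 1),
            ∑ j ∈ Finset.Icc s ((k : ℤ) + 1), p j)
        - (V x k + γ (V x k) / (4 * ((l : ℝ) + 1)) *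
            ∑ s ∈ Finset.Icc ((k : ℤ) - l) (k : ℤ),
              ∑ j ∈ Finset.Icc s (k : ℤ), p j)
      ≤ -(δ / (4 * ((l : ℝ) + 1))) * γ (V x k) := by
  intro x k
  have hV : ∀ y m, 0 ≤ V y m := fun y m => (hα₁.nonneg (norm_nonneg y)).trans (hsand y m).1
  have hγV : 0 ≤ γ (V x k) := hγ.nonneg (hV x k)
  have hVle : V (F x k) (k + 1) ≤ V x k := by
    linarith [hdecay x k, mul_nonneg (hpnn ((k : ℤ) + 1)) hγV]
  have hγle : γ (V (F x k) (k + 1)) ≤ γ (V x k) := hγ.2.1.monotoneOn (hV _ _) (hV x k) hVle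
  have hS' : 0 ≤ windowTailSum p l ((k : ℤ) + 1) :=
    sum_nonneg fun _ _ => sum_nonneg fun _ _ => hpnn _
  have hS := windowTailSum_add_one p l k
  rw [nsmul_eq_mul, Nat.cast_add_one] at hS
  exact increment_le_of_decay_of_window_identity (by positivity) (hpnn _) hγV hγle hS'
    (hPE k) (hdecay x k) hS

/-- Core decay estimate of Theorem 1 (with `κ = id`).
If `V(F(x,k),k+1) - V(x,k) ≤ -p(k+1)γ(V(x,k))` with `p` a bounded discrete PE
parameter (window `l`, level `δ`, extended by zero to negative indices) and
`γ ∈ K∞`, then `U(x,k) = V(x,k) + (γ(V(x,k))/(4(l+1)))·S(k)` satisfies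
`U(F(x,k),k+1) - U(x,k) ≤ -(δ/(4(l+1)))·γ(V(x,k))`. -/
theorem stmt8 (n : ℕ)
    (F : EuclideanSpace ℝ (Fin n) → ℕ → EuclideanSpace ℝ (Fin n))
    (V : EuclideanSpace ℝ (Fin n) → ℕ → ℝ)
    (α₁ α₂ γ : ℝ → ℝ) (hα₁ : IsKInf α₁) (hα₂ : IsKInf α₂) (hγ : IsKInf γ)
    (hsand : ∀ x k, α₁ ‖x‖ ≤ V x k ∧ V x k ≤ α₂ ‖x‖)
    (p : ℤ → ℝ) (pbar : ℝ) (hpnn : ∀ i, 0 ≤ p i) (hpbd : ∀ i, p i ≤ pbar)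
    (hpneg : ∀ i < 0, p i = 0)
    (l : ℕ) (δ : ℝ) (hδ : 0 < δ)
    (hPE : ∀ k : ℕ, δ ≤ ∑ i ∈ Finset.Icc ((k : ℤ) - l) (k : ℤ), p i)
    (hdecay : ∀ x k, V (F x k) (k + 1) - V x k ≤ -p ((k : ℤ) + 1) * γ (V x k)) :
    ∀ x k,
      (V (F x k) (k + 1) + γ (V (F x k) (k + 1)) / (4 * ((l : ℝ) + 1)) *
          ∑ s ∈ Finset.Icc (((k : ℤ) + 1) - l) ((k : ℤ) + 1),
            ∑ j ∈ Finset.Icc s ((k : ℤ) + 1), p j)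
        - (V x k + γ (V x k) / (4 * ((l : ℝ) + 1)) *
            ∑ s ∈ Finset.Icc ((k : ℤ) - l) (k : ℤ),
              ∑ j ∈ Finset.Icc s (k : ℤ), p j)
      ≤ -(δ / (4 * ((l : ℝ) + 1))) * γ (V x k) :=
  stmt8_general n F V α₁ α₂ γ hα₁ hγ hsand p hpnn l δ hPE hdecay
end

section
/- Let p : ℤ≥0 → [0,∞) be bounded and satisfy the discrete PE condition Σ_{i=k-l}^{k} p(i) ≥ δ for all k ∈ ℤ≥0 (some l ∈ ℤ≥0, δ > 0). Let V ∈ UPPD (α₁(|x|) ≤ V(x,k) ≤ α₂(|x|), α₁,α₂ ∈ K∞) satisfy V(F(x,k),k+1) - V(x,k) ≤ -p(k+1)Θ(V(x,k)) for all x, k, where Θ is positive definite. Then there exist κ, γ ∈ K∞ such that the function U(x,k) = κ(V(x,k)) + (γ(V(x,k))/(4(l+1)))·Σ_{s=k-l}^{k} Σ_{j=s}^{k} p(j) satisfies, for some positive definite α₃, U(F(x,k),k+1) - U(x,k) ≤ -α₃(|x|) for all x ∈ ℝⁿ and k ∈ ℤ≥0, and there exist ᾱ₁, ᾱ₂ ∈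 K∞ with ᾱ₁(|x|) ≤ U(x,k) ≤ ᾱ₂(|x|) everywhere. -/
def IsPD (f : ℝ → ℝ) : Prop :=
  ContinuousOn f (Set.Ici 0) ∧ f 0 = 0 ∧ ∀ s > (0 : ℝ), 0 < f s

namespace IsKInf

variable {f g : ℝ → ℝ}

lemma monotoneOn (hf : IsKInf f) : MonotoneOn f (Set.Ici 0) :=
  hf.2.1.monotoneOn

lemma nonneg_s9 (hf : IsKInf f) {x : ℝ} (hx : 0 ≤ x) : 0 ≤ f x :=
  hf.2.2.1 ▸ hf.monotoneOn Set.self_mem_Ici hx hx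

lemma pos (hf : IsKInf f) {x : ℝ} (hx : 0 < x) : 0 < f x :=
  hf.2.2.1 ▸ hf.2.1 Set.self_mem_Ici hx.le hx

lemma isPD (hf : IsKInf f) : IsPD f :=
  ⟨hf.1, hf.2.2.1, fun _ hs => hf.pos hs⟩

lemma comp (hf : IsKInf f) (hg : IsKInf g) : IsKInf (f ∘ g) := by
  have hmaps : Set.MapsTo g (Set.Ici 0) (Set.Ici 0) := fun _ hr => hg.nonneg_s9 hr
  refine ⟨hf.1.comp hg.1 hmaps, hf.2.1.comp hg.2.1 hmaps, by simp [hg.2.2.1, hf.2.2.1], ?_⟩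
  intro M
  obtain ⟨y, hy0, hy⟩ := hf.2.2.2 M
  obtain ⟨x, hx0, hx⟩ := hg.2.2.2 y
  exact ⟨x, hx0, hy.trans (hf.monotoneOn hy0 (hy0.trans hx) hx)⟩

lemma add_mul_const (hf : IsKInf f) (hg : IsKInf g) {c : ℝ} (hc : 0 ≤ c) :
    IsKInf fun r => f r + g r * c := by
  refine ⟨hf.1.add (hg.1.mul continuousOn_const), ?_, by simp [hf.2.2.1, hg.2.2.1], ?_⟩
  · intro a ha b hb hab
    have := mul_le_mul_of_nonneg_right (hg.monotoneOn ha hb hab.le) hc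
    linarith [hf.2.1 ha hb hab]
  · intro M
    obtain ⟨x, hx0, hx⟩ := hf.2.2.2 M
    exact ⟨x, hx0, hx.trans (le_add_of_nonneg_right (mul_nonneg (hg.nonneg_s9 hx0) hc))⟩

lemma mul_const (hf : IsKInf f) {c : ℝ} (hc : 0 < c) : IsKInf fun r => f r * c := by
  refine ⟨hf.1.mul continuousOn_const, fun a ha b hb hab => ?_, by simp [hf.2.2.1], ?_⟩
  · exact mul_lt_mul_of_pos_right (hf.2.1 ha hb hab) hc
  · intro M
    obtain ⟨x, hx0, hx⟩ := hf.2.2.2 (M / c)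
    exact ⟨x, hx0, (div_le_iff₀ hc).1 hx⟩

end IsKInf

lemma IsPD.nonneg_s9 {f : ℝ → ℝ} (hf : IsPD f) {s : ℝ} (hs : 0 ≤ s) : 0 ≤ f s := by
  rcases hs.eq_or_lt with rfl | hs
  · exact hf.2.1.ge
  · exact (hf.2.2 s hs).le

lemma isKInf_id_mul {c : ℝ → ℝ} (hc : Continuous c) (hmono : MonotoneOn c (Set.Ici 0))
    (hpos : ∀ s, 0 < s → 0 < c s) : IsKInf fun s => s * c s := by
  refine ⟨(continuous_id.mul hc).continuousOn, fun a ha b hb hab => ?_, by simp, fun M => ?_⟩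
  · calc a * c a ≤ a * c b := mul_le_mul_of_nonneg_left (hmono ha hb hab.le) ha
      _ < b * c b := mul_lt_mul_of_pos_right hab (hpos b (lt_of_le_of_lt ha hab))
  · have hc1 := hpos 1 one_pos
    set s := max 1 (M / c 1)
    have hs1 : 1 ≤ s := le_max_left _ _
    refine ⟨s, zero_le_one.trans hs1, ?_⟩
    calc M ≤ s * c 1 := (div_le_iff₀ hc1).1 (le_max_right _ _)
      _ ≤ s * c s := mul_le_mul_of_nonneg_left
          (hmono (Set.mem_Ici.2 zero_le_one) (zero_le_one.trans hs1) hs1) (by linarith)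

section MinOnIcc

variable {f : ℝ → ℝ} {a b : ℝ}

lemma sInf_image_Icc_le (hf : Continuous f) {t : ℝ} (ht : t ∈ Set.Icc a b) :
    sInf (f '' Set.Icc a b) ≤ f t :=
  csInf_le (isCompact_Icc.image hf).bddBelow (Set.mem_image_of_mem f ht)

lemma sInf_image_Icc_pos (hf : Continuous f) (hab : a ≤ b)
    (hpos : ∀ t ∈ Set.Icc a b, 0 < f t) : 0 < sInf (f '' Set.Icc a b) := by
  obtain ⟨t, ht, hft⟩ := (isCompact_Icc.image hf).sInf_mem ((Set.nonempty_Icc.2 hab).image f)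
  exact hft ▸ hpos t ht

lemma sInf_image_Icc_le_sInf_image_Icc (hf : Continuous f) {c d : ℝ} (hcd : c ≤ d)
    (hac : a ≤ c) (hdb : d ≤ b) : sInf (f '' Set.Icc a b) ≤ sInf (f '' Set.Icc c d) :=
  csInf_le_csInf (isCompact_Icc.image hf).bddBelow ((Set.nonempty_Icc.2 hcd).image f)
    (Set.image_mono (Set.Icc_subset_Icc hac hdb))

lemma continuous_sInf_image_Icc (hf : Continuous f) {u v : ℝ → ℝ} (hu : Continuous u)
    (hv : Continuous v) (huv : ∀ s, u s ≤ v s) :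
    Continuous fun s => sInf (f '' Set.Icc (u s) (v s)) := by
  have hseg : ∀ s, f '' Set.Icc (u s) (v s) =
      (fun t => f (u s + t * (v s - u s))) '' Set.Icc 0 1 := fun s => by
    rw [← segment_eq_Icc (huv s), segment_eq_image', Set.image_image]
    rfl
  simp_rw [hseg]
  exact isCompact_Icc.continuous_sInf (by fun_prop)

end MinOnIcc

noncomputable def minToOne (θ : ℝ → ℝ) (s : ℝ) : ℝ := sInf (θ '' Set.Icc (min s 1) 1)

noncomputable def minFromOne (θ : ℝ → ℝ) (s : ℝ) : ℝ := sInf (θ '' Set.Icc 1 (max s 1))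

section Envelopes

variable {θ : ℝ → ℝ}

lemma continuous_minToOne (hθ : Continuous θ) : Continuous (minToOne θ) :=
  continuous_sInf_image_Icc hθ (by fun_prop) continuous_const fun _ => min_le_right _ _

lemma continuous_minFromOne (hθ : Continuous θ) : Continuous (minFromOne θ) :=
  continuous_sInf_image_Icc hθ continuous_const (by fun_prop) fun _ => le_max_right _ _

lemma monotone_minToOne (hθ : Continuous θ) : Monotone (minToOne θ) := fun _ _ h =>
  sInf_image_Icc_le_sInf_image_Icc hθ (min_le_right _ _) (min_le_min_right 1 h) le_rfl

lemma antitone_minFromOne (hθ : Continuous θ) : Antitone (minFromOne θ) := fun _ _ h =>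
  sInf_image_Icc_le_sInf_image_Icc hθ (le_max_right _ _) le_rfl (max_le_max_right 1 h)

lemma minToOne_pos (hθ : IsPD θ) (hθc : Continuous θ) {s : ℝ} (hs : 0 < s) :
    0 < minToOne θ s :=
  sInf_image_Icc_pos hθc (min_le_right _ _) fun t ht =>
    hθ.2.2 t ((lt_min hs one_pos).trans_le ht.1)

lemma minFromOne_pos (hθ : IsPD θ) (hθc : Continuous θ) (s : ℝ) : 0 < minFromOne θ s :=
  sInf_image_Icc_pos hθc (le_max_right _ _) fun t ht => hθ.2.2 t (one_pos.trans_le ht.1)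

lemma minToOne_of_one_le {s : ℝ} (hs : 1 ≤ s) : minToOne θ s = θ 1 := by
  simp [minToOne, min_eq_right hs]

lemma minFromOne_of_le_one {s : ℝ} (hs : s ≤ 1) : minFromOne θ s = θ 1 := by
  simp [minFromOne, max_eq_right hs]

lemma minToOne_mul_minFromOne_le (hθ : IsPD θ) (hθc : Continuous θ) (s : ℝ) :
    minToOne θ s * minFromOne θ s ≤ θ s * θ 1 := by
  have hθ1 := (hθ.2.2 1 one_pos).le
  rcases le_total s 1 with hs | hs
  · rw [minFromOne_of_le_one hs]
    exact mul_le_mul_of_nonneg_right (sInf_image_Icc_le hθc ⟨min_le_left _ _, hs⟩) hθ1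
  · rw [minToOne_of_one_le hs, mul_comm (θ s)]
    exact mul_le_mul_of_nonneg_left (sInf_image_Icc_le hθc ⟨hs, le_max_left _ _⟩) hθ1

/-- Near `0`, `γ` is kept below `θ` by the minimum of `θ` on `[s, 1]`; for large `s`, the factor
`1 / minFromOne θ s` in `κ` compensates a possible decay of `θ` at infinity. -/
theorem exists_isKInf_pair_of_continuous (hθ : IsPD θ) (hθc : Continuous θ) :
    ∃ κ γ : ℝ → ℝ, IsKInf κ ∧ IsKInf γ ∧ ∀ a b q : ℝ, 0 ≤ a → 0 ≤ b → 0 ≤ q →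
      b ≤ a - q * θ a → q * γ a ≤ κ a - κ b := by
  have hθ1 : 0 < θ 1 := hθ.2.2 1 one_pos
  have hH := minFromOne_pos hθ hθc
  set c : ℝ → ℝ := fun s => 1 + s / minFromOne θ s with hc
  have hc_mono : MonotoneOn c (Set.Ici 0) := fun a ha b _ hab => by
    simp only [hc]
    exact add_le_add_right
      (div_le_div₀ ((ha : 0 ≤ a).trans hab) hab (hH b) (antitone_minFromOne hθc hab)) 1
  have hc_one : ∀ s, 0 ≤ s → 1 ≤ c s := fun s hs =>
    le_add_of_nonneg_right (div_nonneg hs (hH s).le)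
  refine ⟨fun s => s * c s, fun s => s * (minToOne θ s / θ 1),
    isKInf_id_mul (continuous_const.add (continuous_id.div (continuous_minFromOne hθc)
      fun s => (hH s).ne')) hc_mono fun s hs => one_pos.trans_le (hc_one s hs.le),
    isKInf_id_mul ((continuous_minToOne hθc).div_const _)
      (fun a _ b _ hab => div_le_div_of_nonneg_right (monotone_minToOne hθc hab) hθ1.le)
      fun s hs => div_pos (minToOne_pos hθ hθc hs) hθ1, ?_⟩
  intro a b q ha hb hq hba
  have hθa := hθ.nonneg_s9 ha
  have hγ : a * (minToOne θ a / θ 1) ≤ θ a * c a := by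
    calc a * (minToOne θ a / θ 1) ≤ a * (θ a / minFromOne θ a) :=
          mul_le_mul_of_nonneg_left ((div_le_div_iff₀ hθ1 (hH a)).2
            (minToOne_mul_minFromOne_le hθ hθc a)) ha
      _ ≤ θ a + a * (θ a / minFromOne θ a) := le_add_of_nonneg_left hθa
      _ = θ a * c a := by simp only [hc]; ring
  have hcb : c b ≤ c a := hc_mono hb ha (hba.trans (sub_le_self _ (mul_nonneg hq hθa)))
  calc q * (a * (minToOne θ a / θ 1)) ≤ q * θ a * c a := by
        rw [mul_assoc]; exact mul_le_mul_of_nonneg_left hγ hq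
    _ ≤ (a - b) * c a := mul_le_mul_of_nonneg_right (by linarith) (by linarith [hc_one a ha])
    _ ≤ a * c a - b * c b := by nlinarith [mul_le_mul_of_nonneg_left hcb hb]

end Envelopes

theorem IsPD.exists_isKInf_pair {Θ : ℝ → ℝ} (hΘ : IsPD Θ) :
    ∃ κ γ : ℝ → ℝ, IsKInf κ ∧ IsKInf γ ∧ ∀ a b q : ℝ, 0 ≤ a → 0 ≤ b → 0 ≤ q →
      b ≤ a - q * Θ a → q * γ a ≤ κ a - κ b := by
  have hext : ∀ a, 0 ≤ a → Θ (max a 0) = Θ a := fun a ha => by rw [max_eq_left ha]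
  have hθ : IsPD fun t => Θ (max t 0) :=
    ⟨hΘ.1.comp (by fun_prop) fun t _ => le_max_right t 0, by simpa using hΘ.2.1,
      fun s hs => by simpa [max_eq_left hs.le] using hΘ.2.2 s hs⟩
  have hθc : Continuous fun t => Θ (max t 0) :=
    hΘ.1.comp_continuous (by fun_prop) fun t => le_max_right t 0
  obtain ⟨κ, γ, hκ, hγ, hκγ⟩ := exists_isKInf_pair_of_continuous hθ hθc
  exact ⟨κ, γ, hκ, hγ, fun a b q ha hb hq hba => hκγ a b q ha hb hq (hext a ha ▸ hba)⟩

section WindowSum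

open Finset

noncomputable def windowSum (p : ℤ → ℝ) (l : ℕ) (k : ℤ) : ℝ :=
  ∑ s ∈ Icc (k - l) k, ∑ j ∈ Icc s k, p j

lemma windowSum_add_one (p : ℤ → ℝ) (l : ℕ) (k : ℤ) :
    windowSum p l (k + 1) = windowSum p l k - ∑ j ∈ Icc (k - l) k, p j + (l + 1) * p (k + 1) := by
  have hsplit : ∀ s ∈ Icc (k + 1 - l) (k + 1),
      ∑ j ∈ Icc s (k + 1), p j = ∑ j ∈ Icc s k, p j + p (k + 1) := fun s hs => by
    rw [← insert_Icc_right_eq_Icc_add_one (mem_Icc.1 hs).2, sum_insert (by simp), add_comm]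
  have hcard : #(Icc (k + 1 - l) (k + 1)) = l + 1 := by rw [Int.card_Icc]; omega
  have hnext : windowSum p l (k + 1) =
      ∑ s ∈ Icc (k + 1 - l) k, ∑ j ∈ Icc s k, p j + (l + 1) * p (k + 1) := by
    rw [windowSum, sum_congr rfl hsplit, sum_add_distrib, sum_const, hcard, nsmul_eq_mul,
      ← insert_Icc_right_eq_Icc_add_one (by omega), sum_insert (by simp),
      Icc_eq_empty (by omega), sum_empty, zero_add]
    push_cast; ring
  have hcur : windowSum p l k =
      ∑ j ∈ Icc (k - l) k, p j + ∑ s ∈ Icc (k + 1 - l) k, ∑ j ∈ Icc s k, p j := by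
    rw [windowSum, show k + 1 - (l : ℤ) = k - l + 1 by ring]
    conv_lhs => rw [← insert_Icc_add_one_left_eq_Icc (by omega : k - l ≤ k)]
    rw [sum_insert (by simp)]
  rw [hnext, hcur]
  ring

variable {p : ℤ → ℝ} {l : ℕ}

lemma windowSum_nonneg (hp : ∀ i, 0 ≤ p i) (k : ℤ) : 0 ≤ windowSum p l k :=
  sum_nonneg fun _ _ => sum_nonneg fun j _ => hp j

lemma windowSum_le (hp : ∀ i, 0 ≤ p i) {pbar : ℝ} (hpbar : ∀ i, p i ≤ pbar) (k : ℤ) :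
    windowSum p l k ≤ ((l : ℝ) + 1) ^ 2 * pbar := by
  have hcard : (#(Icc (k - l) k) : ℝ) = l + 1 := by
    rw [Int.card_Icc, show (k + 1 - (k - l)).toNat = l + 1 by omega]
    push_cast; ring
  calc windowSum p l k ≤ ∑ _s ∈ Icc (k - l) k, ∑ j ∈ Icc (k - l) k, p j :=
        sum_le_sum fun s hs => sum_le_sum_of_subset_of_nonneg
          (Icc_subset_Icc_left (mem_Icc.1 hs).1) fun j _ _ => hp j
    _ = (l + 1) * ∑ j ∈ Icc (k - l) k, p j := by rw [sum_const, nsmul_eq_mul, hcard]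
    _ ≤ (l + 1) * ((l + 1) * pbar) := by
        gcongr
        exact (sum_le_card_nsmul _ _ _ fun j _ => hpbar j).trans_eq (by rw [nsmul_eq_mul, hcard])
    _ = ((l : ℝ) + 1) ^ 2 * pbar := by ring

end WindowSum

lemma strictified_decrease {κ γ : ℝ → ℝ} (hγ : IsKInf γ) {L δ a b q A S S' : ℝ} (hL : 0 < L)
    (hb : 0 ≤ b) (hba : b ≤ a) (hq : 0 ≤ q) (hκγ : q * γ a ≤ κ a - κ b) (hS' : 0 ≤ S')
    (hS : S' = S - A + L * q) (hA : δ ≤ A) :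
    κ b + γ b / (4 * L) * S' - (κ a + γ a / (4 * L) * S) ≤ -(γ a * (δ / (4 * L))) := by
  have hγa : 0 ≤ γ a := hγ.nonneg_s9 (hb.trans hba)
  have hγS : γ b * S' ≤ γ a * S' :=
    mul_le_mul_of_nonneg_right (hγ.monotoneOn hb (hb.trans hba) hba) hS'
  have hqγ : 0 ≤ q * γ a := mul_nonneg hq hγa
  have hδ : γ a * δ ≤ γ a * A := mul_le_mul_of_nonneg_left hA hγa
  have h4L : 0 < 4 * L := by positivity
  have hκ4 := mul_le_mul_of_nonneg_left hκγ h4L.le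
  have hLqγ : 0 ≤ L * (q * γ a) := mul_nonneg hL.le hqγ
  refine le_of_mul_le_mul_left ?_ h4L
  have hlhs : 4 * L * (κ b + γ b / (4 * L) * S' - (κ a + γ a / (4 * L) * S)) =
      4 * L * (κ b - κ a) + γ b * S' - γ a * S := by
    field_simp; ring
  have hrhs : 4 * L * -(γ a * (δ / (4 * L))) = -(γ a * δ) := by
    field_simp
  rw [hlhs, hrhs]
  subst hS
  linarith

lemma strictified_bounds {κ γ : ℝ → ℝ} (hκ : IsKInf κ) (hγ : IsKInf γ) {L v₁ v v₂ W C : ℝ}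
    (hL : 0 < L) (hv₁ : 0 ≤ v₁) (h₁ : v₁ ≤ v) (h₂ : v ≤ v₂) (hW : 0 ≤ W) (hWC : W ≤ C) :
    κ v₁ ≤ κ v + γ v / L * W ∧ κ v + γ v / L * W ≤ κ v₂ + γ v₂ * (C / L) := by
  have hv : 0 ≤ v := hv₁.trans h₁
  have hγv : γ v ≤ γ v₂ := hγ.monotoneOn hv (hv.trans h₂) h₂
  have hγv₀ : 0 ≤ γ v := hγ.nonneg_s9 hv
  refine ⟨(hκ.monotoneOn hv₁ hv h₁).trans (le_add_of_nonneg_right (by positivity)),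
    add_le_add (hκ.monotoneOn hv (hv.trans h₂) h₂) ?_⟩
  calc γ v / L * W ≤ γ v₂ / L * C := by gcongr; exact div_nonneg (hγv₀.trans hγv) hL.le
    _ = γ v₂ * (C / L) := by ring

theorem stmt9_general (n : ℕ)
    (F : EuclideanSpace ℝ (Fin n) → ℕ → EuclideanSpace ℝ (Fin n))
    (V : EuclideanSpace ℝ (Fin n) → ℕ → ℝ)
    (α₁ α₂ : ℝ → ℝ) (hα₁ : IsKInf α₁) (hα₂ : IsKInf α₂)
    (hsand : ∀ x k, α₁ ‖x‖ ≤ V x k ∧ V x k ≤ α₂ ‖x‖)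
    (p : ℤ → ℝ) (pbar : ℝ) (hpnn : ∀ i, 0 ≤ p i) (hpbd : ∀ i, p i ≤ pbar)
    (l : ℕ) (δ : ℝ) (hδ : 0 < δ)
    (hPE : ∀ k : ℕ, δ ≤ ∑ i ∈ Finset.Icc ((k : ℤ) - l) (k : ℤ), p i)
    (Θ : ℝ → ℝ) (hΘ : IsPD Θ)
    (hdecay : ∀ x k, V (F x k) (k + 1) - V x k ≤ -p ((k : ℤ) + 1) * Θ (V x k)) :
    ∃ κ γ : ℝ → ℝ, IsKInf κ ∧ IsKInf γ ∧
      ∃ U : EuclideanSpace ℝ (Fin n) → ℕ → ℝ,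
        (∀ x k, U x k = κ (V x k) + γ (V x k) / (4 * ((l : ℝ) + 1)) *
            ∑ s ∈ Finset.Icc ((k : ℤ) - l) (k : ℤ),
              ∑ j ∈ Finset.Icc s (k : ℤ), p j) ∧
        (∃ α₃ : ℝ → ℝ, IsPD α₃ ∧
          ∀ x k, U (F x k) (k + 1) - U x k ≤ -α₃ ‖x‖) ∧
        (∃ β₁ β₂ : ℝ → ℝ, IsKInf β₁ ∧ IsKInf β₂ ∧
          ∀ x k, β₁ ‖x‖ ≤ U x k ∧ U x k ≤ β₂ ‖x‖) := by
  obtain ⟨κ, γ, hκ, hγ, hκγ⟩ := hΘ.exists_isKInf_pair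
  have hα₁x : ∀ x : EuclideanSpace ℝ (Fin n), 0 ≤ α₁ ‖x‖ := fun x => hα₁.nonneg_s9 (norm_nonneg x)
  have hV : ∀ x k, 0 ≤ V x k := fun x k => (hα₁x x).trans (hsand x k).1
  have hpbar : 0 ≤ pbar := (hpnn 0).trans (hpbd 0)
  refine ⟨κ, γ, hκ, hγ, fun x k => κ (V x k) + γ (V x k) / (4 * ((l : ℝ) + 1)) * windowSum p l k,
    fun _ _ => rfl, ⟨fun r => γ (α₁ r) * (δ / (4 * ((l : ℝ) + 1))),
      ((hγ.comp hα₁).mul_const (by positivity)).isPD, fun x k => ?_⟩,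
    κ ∘ α₁, fun r => κ (α₂ r) + γ (α₂ r) * (((l : ℝ) + 1) ^ 2 * pbar / (4 * ((l : ℝ) + 1))),
    hκ.comp hα₁, (hκ.comp hα₂).add_mul_const (hγ.comp hα₂) (by positivity),
    fun x k => strictified_bounds hκ hγ (by positivity) (hα₁x x) (hsand x k).1 (hsand x k).2
      (windowSum_nonneg hpnn _) (windowSum_le hpnn hpbd _)⟩
  have hstep : V (F x k) (k + 1) ≤ V x k - p ((k : ℤ) + 1) * Θ (V x k) := by
    linarith [hdecay x k]
  calc _ ≤ -(γ (V x k) * (δ / (4 * ((l : ℝ) + 1)))) :=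
        strictified_decrease hγ (by positivity) (hV _ _)
          (hstep.trans (sub_le_self _ (mul_nonneg (hpnn _) (hΘ.nonneg_s9 (hV x k)))))
          (hpnn _) (hκγ _ _ _ (hV x k) (hV _ _) (hpnn _) hstep) (windowSum_nonneg hpnn _)
          (by push_cast; exact windowSum_add_one p l k) (hPE k)
    _ ≤ -(γ (α₁ ‖x‖) * (δ / (4 * ((l : ℝ) + 1)))) :=
        neg_le_neg (mul_le_mul_of_nonneg_right
          (hγ.monotoneOn (hα₁x x) (hV x k) (hsand x k).1) (by positivity))

/-- Theorem 1: strictification of a nonstrict discrete-time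
Lyapunov function with PE decay. There exist `κ, γ ∈ K∞` such that
`U(x,k) = κ(V(x,k)) + (γ(V(x,k))/(4(l+1)))·Σ_{s=k-l}^{k} Σ_{j=s}^{k} p(j)` is a
strict Lyapunov function: `ΔU ≤ -α₃(|x|)` for some positive definite `α₃`, and
`U` is sandwiched between two K∞ functions of `|x|`. -/
theorem stmt9 (n : ℕ)
    (F : EuclideanSpace ℝ (Fin n) → ℕ → EuclideanSpace ℝ (Fin n))
    (V : EuclideanSpace ℝ (Fin n) → ℕ → ℝ)
    (α₁ α₂ : ℝ → ℝ) (hα₁ : IsKInf α₁) (hα₂ : IsKInf α₂)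
    (hsand : ∀ x k, α₁ ‖x‖ ≤ V x k ∧ V x k ≤ α₂ ‖x‖)
    (p : ℤ → ℝ) (pbar : ℝ) (hpnn : ∀ i, 0 ≤ p i) (hpbd : ∀ i, p i ≤ pbar)
    (hpneg : ∀ i < 0, p i = 0)
    (l : ℕ) (δ : ℝ) (hδ : 0 < δ)
    (hPE : ∀ k : ℕ, δ ≤ ∑ i ∈ Finset.Icc ((k : ℤ) - l) (k : ℤ), p i)
    (Θ : ℝ → ℝ) (hΘ : IsPD Θ)
    (hdecay : ∀ x k, V (F x k) (k + 1) - V x k ≤ -p ((k : ℤ) + 1) * Θ (V x k)) :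
    ∃ κ γ : ℝ → ℝ, IsKInf κ ∧ IsKInf γ ∧
      ∃ U : EuclideanSpace ℝ (Fin n) → ℕ → ℝ,
        (∀ x k, U x k = κ (V x k) + γ (V x k) / (4 * ((l : ℝ) + 1)) *
            ∑ s ∈ Finset.Icc ((k : ℤ) - l) (k : ℤ),
              ∑ j ∈ Finset.Icc s (k : ℤ), p j) ∧
        (∃ α₃ : ℝ → ℝ, IsPD α₃ ∧
          ∀ x k, U (F x k) (k + 1) - U x k ≤ -α₃ ‖x‖) ∧
        (∃ β₁ β₂ : ℝ → ℝ, IsKInf β₁ ∧ IsKInf β₂ ∧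
          ∀ x k, β₁ ‖x‖ ≤ U x k ∧ U x k ≤ β₂ ‖x‖) :=
  stmt9_general n F V α₁ α₂ hα₁ hα₂ hsand p pbar hpnn hpbd l δ hδ hPE Θ hΘ hdecay
end

section
/- Suppose V : ℝⁿ × ℤ≥0 → [0,∞) satisfies α₁(|x|) ≤ V(x,k) ≤ α₂(|x|) with α₁, α₂ ∈ K∞ and V(F(x,k),k+1) - V(x,k) ≤ -α₃(|x|) for all x, k, where α₃ is continuous positive definite. Then the function Θ(v) := min{α₃(s) : α₂⁻¹(v) ≤ s ≤ α₁⁻¹(v)} is positive definite and satisfies V(F(x,k),k+1) - V(x,k) ≤ -Θ(V(x,k)) for all x ∈ ℝⁿ, k ∈ ℤ≥0. -/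
/-- Converting a state-dependent strict decay `-α₃(|x|)` into a
Lyapunov-function-dependent one: `Θ(v) = min{α₃(s) : α₂⁻¹(v) ≤ s ≤ α₁⁻¹(v)}`
is positive definite and `ΔV ≤ -Θ(V)`. -/
theorem stmt10 (n : ℕ) (hn : 0 < n)
    (F : EuclideanSpace ℝ (Fin n) → ℕ → EuclideanSpace ℝ (Fin n))
    (V : EuclideanSpace ℝ (Fin n) → ℕ → ℝ)
    (α₁ α₂ α₁inv α₂inv α₃ : ℝ → ℝ) (hα₁ : IsKInf α₁) (hα₂ : IsKInf α₂)
    (hinv₁ : ∀ s ≥ (0 : ℝ), 0 ≤ α₁inv s ∧ α₁ (α₁inv s) = s ∧ α₁inv (α₁ s) = s)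
    (hinv₂ : ∀ s ≥ (0 : ℝ), 0 ≤ α₂inv s ∧ α₂ (α₂inv s) = s ∧ α₂inv (α₂ s) = s)
    (hle : ∀ s ≥ (0 : ℝ), α₁ s ≤ α₂ s)
    (hα₃c : ContinuousOn α₃ (Set.Ici 0)) (hα₃0 : α₃ 0 = 0)
    (hα₃pos : ∀ s > (0 : ℝ), 0 < α₃ s)
    (hsand : ∀ x k, α₁ ‖x‖ ≤ V x k ∧ V x k ≤ α₂ ‖x‖)
    (hdecay : ∀ x k, V (F x k) (k + 1) - V x k ≤ -α₃ ‖x‖)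
    (Θ : ℝ → ℝ)
    (hΘ : ∀ v ≥ (0 : ℝ), Θ v = sInf (α₃ '' Set.Icc (α₂inv v) (α₁inv v))) :
    (Θ 0 = 0 ∧ ∀ v > (0 : ℝ), 0 < Θ v) ∧
      ∀ x k, V (F x k) (k + 1) - V x k ≤ -Θ (V x k) := by
  obtain ⟨hc₁, hm₁, h0₁, -⟩ := hα₁
  obtain ⟨hc₂, hm₂, h0₂, -⟩ := hα₂
  -- α₂inv v ≤ α₁inv v for v ≥ 0
  have hab : ∀ v ≥ (0:ℝ), α₂inv v ≤ α₁inv v := by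
    intro v hv
    by_contra h
    push_neg at h
    obtain ⟨h1a, h1b, -⟩ := hinv₁ v hv
    obtain ⟨h2a, h2b, -⟩ := hinv₂ v hv
    have := hm₁ (Set.mem_Ici.2 h1a) (Set.mem_Ici.2 h2a) h
    have hle' := hle (α₂inv v) h2a
    rw [h1b] at this
    rw [h2b] at hle'
    linarith
  constructor
  · constructor
    · have h1 : α₁inv 0 = 0 := by
        have := (hinv₁ 0 le_rfl).2.2
        rwa [h0₁] at this
      have h2 : α₂inv 0 = 0 := by
        have := (hinv₂ 0 le_rfl).2.2
        rwa [h0₂] at this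
      rw [hΘ 0 le_rfl, h1, h2, Set.Icc_self, Set.image_singleton, csInf_singleton, hα₃0]
    · intro v hv
      have hv' := le_of_lt hv
      obtain ⟨h2a, h2b, -⟩ := hinv₂ v hv'
      have ha : 0 < α₂inv v := by
        rcases lt_or_eq_of_le h2a with h | h
        · exact h
        · exfalso; rw [← h, h0₂] at h2b; linarith
      have hsub : Set.Icc (α₂inv v) (α₁inv v) ⊆ Set.Ici 0 :=
        fun s hs => le_trans h2a hs.1
      have hne : (Set.Icc (α₂inv v) (α₁inv v)).Nonempty :=
        ⟨α₂inv v, le_rfl, hab v hv'⟩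
      have hK : IsCompact (α₃ '' Set.Icc (α₂inv v) (α₁inv v)) :=
        isCompact_Icc.image_of_continuousOn (hα₃c.mono hsub)
      obtain ⟨s, hs, hseq⟩ := hK.sInf_mem (hne.image _)
      rw [hΘ v hv', ← hseq]
      exact hα₃pos s (lt_of_lt_of_le ha hs.1)
  · intro x k
    have hx0 : (0:ℝ) ≤ ‖x‖ := norm_nonneg x
    obtain ⟨hs1, hs2⟩ := hsand x k
    have hV0 : 0 ≤ V x k := by
      have := hm₁.monotoneOn (Set.mem_Ici.2 le_rfl) (Set.mem_Ici.2 hx0) hx0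
      rw [h0₁] at this; linarith
    obtain ⟨h1a, h1b, -⟩ := hinv₁ (V x k) hV0
    obtain ⟨h2a, h2b, -⟩ := hinv₂ (V x k) hV0
    have hmem : ‖x‖ ∈ Set.Icc (α₂inv (V x k)) (α₁inv (V x k)) := by
      constructor
      · by_contra h
        push_neg at h
        have := hm₂ (Set.mem_Ici.2 hx0) (Set.mem_Ici.2 h2a) h
        rw [h2b] at this; linarith
      · by_contra h
        push_neg at h
        have := hm₁ (Set.mem_Ici.2 h1a) (Set.mem_Ici.2 hx0) h
        rw [h1b] at this; linarith
    have hsub : Set.Icc (α₂inv (V x k)) (α₁inv (V x k)) ⊆ Set.Ici 0 :=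
      fun s hs => le_trans h2a hs.1
    have hK : IsCompact (α₃ '' Set.Icc (α₂inv (V x k)) (α₁inv (V x k))) :=
      isCompact_Icc.image_of_continuousOn (hα₃c.mono hsub)
    have hΘle : Θ (V x k) ≤ α₃ ‖x‖ := by
      rw [hΘ _ hV0]
      exact csInf_le hK.bddBelow ⟨‖x‖, hmem, rfl⟩
    have := hdecay x k
    linarith
end
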